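/- arXiv:2507.05951 — 2 statements merged into one kernel-verified Lean document; each statement's English description precedes it below -/
import Mathlib

section
/- In the reduction from Exact Cover: suppose R ⊆ F is a set of events such that ⋂R contains no Z-variable. Then for every universe index ℓ ∈ {1,…,n} there exists i with s_ℓ ∈ A_i, F_i ∈ R, and Y_{i,ℓ} ∉ ⋂R; consequently ⋂R contains at most m − n Y-variables. -/
inductive World (n k : ℕ) : Type where
  | W : World n k
  | X : World n k
  | Y : Fin k → Fin n → World n k
  | Z : Fin n → World n k
  deriving DecidableEq, Fintype

/-- The event `F_i`: excludes `Y i l` and `Z l` for every `l ∈ A i`. -/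
def Fev {n k : ℕ} (A : Fin k → Finset (Fin n)) (i : Fin k) : Set (World n k) :=
  {w | match w with
       | .Y j l => ¬ (j = i ∧ l ∈ A i)
       | .Z l => l ∉ A i
       | _ => True}

open scoped Classical in
/-- Number of (valid) `Y`-variables belonging to a set of worlds. -/
noncomputable def Ycount {n k : ℕ} (A : Fin k → Finset (Fin n))
    (T : Set (World n k)) : ℕ :=
  (Finset.univ.filter
    (fun p : Fin k × Fin n => p.2 ∈ A p.1 ∧ World.Y p.1 p.2 ∈ T)).card

open scoped Classical in
/-- Number of `Z`-variables belonging to a set of worlds. -/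
noncomputable def Zcount {n k : ℕ} (T : Set (World n k)) : ℕ :=
  (Finset.univ.filter (fun l : Fin n => World.Z l ∈ T)).card

/-- The probability function of the reduction (`x = 1/3`). -/
noncomputable def prob {n k : ℕ} (A : Fin k → Finset (Fin n)) (y z : ℝ) :
    World n k → ℝ
  | .W => 1/3
  | .X => 1/3
  | .Y i l => if l ∈ A i then y else 0
  | .Z _ => z

/-- The additive extension of a probability function to sets of worlds. -/
noncomputable def pstar {n k : ℕ} (π : World n k → ℝ) (S : Set (World n k)) : ℝ :=
  ∑ w : World n k, Set.indicator S π w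

/-- The goal event `E = {W₀} ∪ Y`. -/
def goal {n k : ℕ} : Set (World n k) :=
  {w | w = World.W ∨ ∃ (i : Fin k) (l : Fin n), w = World.Y i l}

theorem stmt_8 (n k : ℕ) (A : Fin k → Finset (Fin n))
    (R : Set (Fin k))
    (hZ : ∀ l : Fin n, World.Z l ∉ ⋂ i ∈ R, Fev A i) :
    (∀ l : Fin n, ∃ i : Fin k, l ∈ A i ∧ i ∈ R ∧
        World.Y i l ∉ ⋂ i' ∈ R, Fev A i') ∧
      Ycount A (⋂ i ∈ R, Fev A i) ≤ (∑ i : Fin k, (A i).card) - n := by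

  classical
  have h1 : ∀ l : Fin n, ∃ i : Fin k, l ∈ A i ∧ i ∈ R ∧
      World.Y i l ∉ ⋂ i' ∈ R, Fev A i' := by
    intro l
    have hz := hZ l
    simp only [Set.mem_iInter] at hz
    push_neg at hz
    obtain ⟨i, hiR, hi⟩ := hz
    have hl : l ∈ A i := by
      by_contra h
      exact hi (by simp [Fev, h])
    refine ⟨i, hl, hiR, ?_⟩
    intro hmem
    have := Set.mem_iInter₂.mp hmem i hiR
    simp [Fev, hl] at this
  refine ⟨h1, ?_⟩
  set IR := ⋂ i ∈ R, Fev A i with hIR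
  set T := Finset.univ.filter
      (fun p : Fin k × Fin n => p.2 ∈ A p.1 ∧ World.Y p.1 p.2 ∈ IR) with hT
  set Sf := Finset.univ.filter (fun p : Fin k × Fin n => p.2 ∈ A p.1) with hSf
  have hTS : T ⊆ Sf := by
    intro p hp
    simp only [hT, hSf, Finset.mem_filter] at *
    exact ⟨hp.1, hp.2.1⟩
  have hSfcard : Sf.card = ∑ i : Fin k, (A i).card := by
    rw [hSf, Finset.card_filter, Fintype.sum_prod_type]
    congr 1
    ext i
    rw [← Finset.card_filter]
    congr 1
    exact Finset.filter_univ_mem (A i)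
  have hg : ∀ l : Fin n, ((h1 l).choose, l) ∈ Sf \ T := by
    intro l
    obtain ⟨ha, _, hy⟩ := (h1 l).choose_spec
    simp only [Finset.mem_sdiff, hSf, hT, Finset.mem_filter, Finset.mem_univ,
      true_and]
    exact ⟨ha, fun h => hy h.2⟩
  have hn : n ≤ (Sf \ T).card := by
    have := Finset.card_le_card_of_injOn (s := (Finset.univ : Finset (Fin n)))
      (fun l : Fin n => ((h1 l).choose, l))
      (fun l _ => hg l) (fun a _ b _ h => by simpa using congrArg Prod.snd h)
    simpa using this
  have hsd : (Sf \ T).card = Sf.card - T.card := Finset.card_sdiff_of_subset hTS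
  have hTc : T.card ≤ Sf.card := Finset.card_le_card hTS
  have : Ycount A IR = T.card := by
    simp [Ycount, hT]
  omega
end

section
/- In the reduction from Exact Cover, conversely: if H ⊆ A is an exact cover of S (pairwise disjoint, union equal to S), then the observation R = {F_i | A_i ∈ H} satisfies: ⋂R contains W₀, X₀, no Z-variables, and exactly m − n Y-variables; hence π*(E ∩ ⋂R)/π*(⋂R) = (x+(m-n)y)/(2x+(m-n)y) = τ, so R is a solution to the persuasion instance. -/
def worldEquiv (n k : ℕ) : (Unit ⊕ Unit) ⊕ (Fin k × Fin n) ⊕ Fin n ≃ World n k where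
  toFun := fun x => match x with
    | .inl (.inl _) => .W
    | .inl (.inr _) => .X
    | .inr (.inl p) => .Y p.1 p.2
    | .inr (.inr l) => .Z l
  invFun := fun w => match w with
    | .W => .inl (.inl ())
    | .X => .inl (.inr ())
    | .Y i l => .inr (.inl (i, l))
    | .Z l => .inr (.inr l)
  left_inv := by rintro ((_|_)|(⟨i,l⟩|l)) <;> rfl
  right_inv := by rintro (_|_|⟨i,l⟩|l) <;> rfl

lemma sum_world {n k : ℕ} (f : World n k → ℝ) :
    ∑ w : World n k, f w
      = f .W + f .X + (∑ p : Fin k × Fin n, f (.Y p.1 p.2)) + ∑ l : Fin n, f (.Z l) := by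
  rw [← Equiv.sum_comp (worldEquiv n k) f]
  simp [worldEquiv, Fintype.sum_sum_type]
  ring

open scoped Classical

lemma pstar_eval {n k : ℕ} (A : Fin k → Finset (Fin n)) (y z : ℝ)
    (S : Set (World n k)) :
    pstar (prob A y z) S =
      (if World.W ∈ S then (1:ℝ)/3 else 0) + (if World.X ∈ S then (1:ℝ)/3 else 0)
      + ((Ycount A S : ℝ) * y)
      + ∑ l : Fin n, (if World.Z l ∈ S then z else 0) := by
  rw [pstar, sum_world]
  have hY : (∑ p : Fin k × Fin n, Set.indicator S (prob A y z) (World.Y p.1 p.2))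
      = (Ycount A S : ℝ) * y := by
    have : ∀ p : Fin k × Fin n, Set.indicator S (prob A y z) (World.Y p.1 p.2)
        = if (p.2 ∈ A p.1 ∧ World.Y p.1 p.2 ∈ S) then y else 0 := by
      intro p
      by_cases h1 : World.Y p.1 p.2 ∈ S <;> by_cases h2 : p.2 ∈ A p.1 <;>
        simp [Set.indicator_apply, prob, h1, h2]
    rw [Finset.sum_congr rfl (fun p _ => this p), ← Finset.sum_filter,
      Finset.sum_const, nsmul_eq_mul, Ycount]
  rw [hY]
  simp [Set.indicator_apply, prob]

theorem stmt_10 (n k : ℕ) (A : Fin k → Finset (Fin n))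
    (H : Set (Fin k))
    (hdisj : ∀ i ∈ H, ∀ j ∈ H, i ≠ j → Disjoint (A i) (A j))
    (hcov : ∀ l : Fin n, ∃ i ∈ H, l ∈ A i)
    (m : ℕ) (hm : m = ∑ i : Fin k, (A i).card)
    (y z τ : ℝ)
    (hy : y = (1 - 2*(1/3 : ℝ)) / (m * (1 + 2*n)))
    (hz : z = 2*m*y)
    (hτ : τ = (1/3 + ((m - n : ℕ) : ℝ)*y) / (2*(1/3) + ((m - n : ℕ) : ℝ)*y)) :
    World.W ∈ ⋂ i ∈ H, Fev A i ∧
      World.X ∈ ⋂ i ∈ H, Fev A i ∧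
      (∀ l : Fin n, World.Z l ∉ ⋂ i ∈ H, Fev A i) ∧
      Ycount A (⋂ i ∈ H, Fev A i) = m - n ∧
      pstar (prob A y z) (goal ∩ ⋂ i ∈ H, Fev A i) /
          pstar (prob A y z) (⋂ i ∈ H, Fev A i) = τ := by
  set T := ⋂ i ∈ H, Fev A i with hT
  have hW : World.W ∈ T := Set.mem_iInter₂.2 (fun i _ => trivial)
  have hX : World.X ∈ T := Set.mem_iInter₂.2 (fun i _ => trivial)
  have hZ : ∀ l : Fin n, World.Z l ∉ T := by
    intro l hl
    obtain ⟨i, hi, hla⟩ := hcov l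
    exact (Set.mem_iInter₂.1 hl i hi) hla
  have hYmem : ∀ (i : Fin k) (l : Fin n), l ∈ A i → (World.Y i l ∈ T ↔ i ∉ H) := by
    intro i l hl
    constructor
    · intro hmem hiH
      exact (Set.mem_iInter₂.1 hmem i hiH) ⟨rfl, hl⟩
    · intro hiH
      refine Set.mem_iInter₂.2 (fun j hj => ?_)
      rintro ⟨rfl, -⟩
      exact hiH hj
  -- counting
  have hn_le_m : (Finset.univ.filter (fun i : Fin k => i ∈ H)).sum (fun i => (A i).card) = n := by
    have hun : (Finset.univ.filter (fun i : Fin k => i ∈ H)).biUnion A = Finset.univ := by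
      apply Finset.eq_univ_iff_forall.2
      intro l
      obtain ⟨i, hi, hla⟩ := hcov l
      exact Finset.mem_biUnion.2 ⟨i, Finset.mem_filter.2 ⟨Finset.mem_univ i, hi⟩, hla⟩
    have hdisj' : ∀ i ∈ Finset.univ.filter (fun i : Fin k => i ∈ H),
        ∀ j ∈ Finset.univ.filter (fun i : Fin k => i ∈ H), i ≠ j → Disjoint (A i) (A j) := by
      intro i hi j hj hij
      exact hdisj i (Finset.mem_filter.1 hi).2 j (Finset.mem_filter.1 hj).2 hij
    calc (Finset.univ.filter (fun i : Fin k => i ∈ H)).sum (fun i => (A i).card)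
        = ((Finset.univ.filter (fun i : Fin k => i ∈ H)).biUnion A).card :=
          (Finset.card_biUnion hdisj').symm
      _ = n := by rw [hun]; simp
  have hYcount : Ycount A T = m - n := by
    have h1 : Ycount A T
        = ∑ i : Fin k, if i ∉ H then (A i).card else 0 := by
      rw [Ycount, Finset.card_filter, Fintype.sum_prod_type]
      apply Finset.sum_congr rfl
      intro i _
      by_cases hiH : i ∈ H
      · simp only [hiH, not_true_eq_false, if_false]
        apply Finset.sum_eq_zero
        intro l _
        by_cases hl : l ∈ A i
        · simp [hl, hYmem i l hl, hiH]
        · simp [hl]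
      · simp only [hiH, not_false_eq_true, if_true]
        have hcong : ∀ l : Fin n,
            (if (l ∈ A i ∧ World.Y i l ∈ T) then 1 else 0) = if l ∈ A i then 1 else 0 := by
          intro l
          by_cases hl : l ∈ A i
          · simp [hl, (hYmem i l hl).2 hiH]
          · simp [hl]
        rw [Finset.sum_congr rfl (fun l _ => hcong l), ← Finset.card_filter]
        simp
    have h2 : (∑ i : Fin k, if i ∉ H then (A i).card else 0)
        = (Finset.univ.filter (fun i : Fin k => i ∉ H)).sum (fun i => (A i).card) := by
      rw [Finset.sum_filter]
    have h3 := Finset.sum_filter_add_sum_filter_not Finset.univ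
      (fun i : Fin k => i ∈ H) (fun i => (A i).card)
    rw [h1, h2]
    have h4 : (Finset.univ.filter (fun i : Fin k => ¬ i ∈ H)).sum (fun i => (A i).card)
        = m - n := by
      omega
    exact h4
  refine ⟨hW, hX, hZ, hYcount, ?_⟩
  -- probability computation
  have hWgoal : World.W ∈ (goal : Set (World n k)) := Or.inl rfl
  have hXgoal : World.X ∉ (goal : Set (World n k)) := by
    rintro (h | ⟨i, l, h⟩) <;> exact absurd h (by simp)
  have hYgoal : ∀ (i : Fin k) (l : Fin n), World.Y i l ∈ (goal : Set (World n k)) :=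
    fun i l => Or.inr ⟨i, l, rfl⟩
  have hYcount2 : Ycount A (goal ∩ T) = m - n := by
    rw [← hYcount]
    unfold Ycount
    congr 1
    ext p
    simp only [Finset.mem_filter, Finset.mem_univ, true_and, Set.mem_inter_iff]
    exact ⟨fun ⟨h1, _, h2⟩ => ⟨h1, h2⟩, fun ⟨h1, h2⟩ => ⟨h1, hYgoal _ _, h2⟩⟩
  rw [pstar_eval, pstar_eval, hYcount, hYcount2, hτ]
  simp only [Set.mem_inter_iff, hW, hX, hWgoal, hXgoal, hZ, and_true, and_false,
    if_true, if_false, false_and, and_self, ite_false, ite_true, Finset.sum_const_zero,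
    not_true_eq_false, not_false_eq_true]
  ring_nf
end
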